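/- arXiv:1507.00266 — 2 statements merged into one kernel-verified Lean document; each statement's English description precedes it below -/
import Mathlib

section
/- For β > 0, the function W : GL⁺(2) → ℝ defined by W(F) = (‖F‖² / det F)^β, where ‖·‖ denotes the Frobenius norm, is polyconvex if and only if β ≥ 1, and rank-one convex if and only if β ≥ 1. -/
/-!
For `β ≥ 1`, the map `(F, δ) ↦ ‖F‖² / δ` is convex on `δ > 0`, being the perspective of the
convex function `‖·‖²`, and `r ↦ r ^ β` is convex and nondecreasing on `[0, ∞)`; extended by `+∞`
for `δ ≤ 0` this gives a convex `P` with `W F = P (F, det F)`. Polyconvexity implies rank-one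
convexity because `det` is affine along rank-one lines.

Conversely, rank-one convexity along the line `x ↦ diag(x, 1)` makes
`g x = ((x ^ 2 + 1) / x) ^ β` convex on `(0, ∞)`. For `β < 1` we have `g x = o(x)`, and a convex
function that is `o(x)` at infinity is nonincreasing, contradicting `g 1 = 2 ^ β < (5/2) ^ β = g 2`.
-/

open Matrix Set

noncomputable section

/-- The space of real 2×2 matrices. -/
abbrev Mat2 : Type := Matrix (Fin 2) (Fin 2) ℝ

/-- The special orthogonal group SO(2): orthogonal 2×2 matrices with determinant 1. -/
def SO2 : Set Mat2 := {Q : Mat2 | Qᵀ * Q = 1 ∧ Q.det = 1}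

/-- A function `W` (viewed on GL⁺(2) = {F | 0 < det F}) is polyconvex if there is a
convex function `P : ℝ^{2×2} × ℝ → ℝ ∪ {+∞}` with `W F = P (F, det F)` on GL⁺(2). -/
def Polyconvex (W : Mat2 → ℝ) : Prop :=
  ∃ P : Mat2 × ℝ → EReal,
    (∀ x y : Mat2 × ℝ, ∀ a b : ℝ, 0 ≤ a → 0 ≤ b → a + b = 1 →
      P (a • x + b • y) ≤ (a : EReal) * P x + (b : EReal) * P y) ∧
    (∀ F : Mat2, 0 < F.det → (W F : EReal) = P (F, F.det))

/-- Rank-one convexity of `W` on GL⁺(2): convexity along rank-one line segments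
lying in GL⁺(2). -/
def RankOneConvex (W : Mat2 → ℝ) : Prop :=
  ∀ F : Mat2, 0 < F.det → ∀ ξ η : Fin 2 → ℝ, ∀ θ : ℝ, θ ∈ Set.Icc (0:ℝ) 1 →
    (∀ t ∈ Set.Icc (0:ℝ) 1, 0 < (F + t • vecMulVec ξ η).det) →
    W (F + (1 - θ) • vecMulVec ξ η) ≤ θ * W F + (1 - θ) * W (F + vecMulVec ξ η)

/-- Objectivity and isotropy: bi-SO(2)-invariance on GL⁺(2). -/
def ObjectiveIsotropic (W : Mat2 → ℝ) : Prop :=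
  ∀ F : Mat2, 0 < F.det → ∀ Q₁ Q₂ : Mat2, Q₁ ∈ SO2 → Q₂ ∈ SO2 →
    W (Q₁ * F * Q₂) = W F

/-- Isochoric: invariance under positive scaling on GL⁺(2). -/
def Isochoric (W : Mat2 → ℝ) : Prop :=
  ∀ F : Mat2, 0 < F.det → ∀ a : ℝ, 0 < a → W (a • F) = W F

/-- The 2×2 diagonal matrix diag(a, b). -/
def diag2 (a b : ℝ) : Mat2 := !![a, 0; 0, b]

/-- The squared Frobenius norm of a 2×2 matrix. -/
def frobSq (F : Mat2) : ℝ := ∑ i, ∑ j, (F i j) ^ 2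

/-- The operator norm of `F` induced by the Euclidean norm on ℝ²:
the supremum of ‖F·x‖ over Euclidean-unit vectors x. -/
def opNorm2 (F : Mat2) : ℝ :=
  sSup {r : ℝ | ∃ x : Fin 2 → ℝ, (x 0) ^ 2 + (x 1) ^ 2 = 1 ∧
    r = Real.sqrt ((F.mulVec x 0) ^ 2 + (F.mulVec x 1) ^ 2)}

open Filter Asymptotics

theorem ConvexOn.perspective {E : Type*} [AddCommGroup E] [Module ℝ E] {f : E → ℝ}
    (hf : ConvexOn ℝ univ f) :
    ConvexOn ℝ {p : E × ℝ | 0 < p.2} fun p => p.2 * f (p.2⁻¹ • p.1) := by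
  refine ⟨convex_halfSpace_gt (LinearMap.snd ℝ E ℝ).isLinear 0, ?_⟩
  rintro ⟨x, s⟩ (hs : 0 < s) ⟨y, u⟩ (hu : 0 < u) a b ha hb hab
  set t := a * s + b * u
  have ht : 0 < t := convex_Ioi (0 : ℝ) hs hu ha hb hab
  have hcomb :
      t⁻¹ • (a • x + b • y) = (a * s / t) • (s⁻¹ • x) + (b * u / t) • (u⁻¹ • y) := by
    simp only [smul_add, smul_smul]
    congr 2 <;> field_simp
  have key := hf.2 (x := s⁻¹ • x) (y := u⁻¹ • y) trivial trivial
    (by positivity : 0 ≤ a * s / t) (by positivity : 0 ≤ b * u / t)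
    (by rw [← add_div]; exact div_self ht.ne')
  simp only [Prod.smul_mk, Prod.mk_add_mk, smul_eq_mul]
  rw [hcomb]
  calc t * f _ ≤ t * _ := mul_le_mul_of_nonneg_left key ht.le
    _ = _ := by simp only [smul_eq_mul]; field_simp

theorem convexOn_frobSq : ConvexOn ℝ univ frobSq := by
  refine ⟨convex_univ, fun F _ G _ a b ha hb hab => ?_⟩
  simp only [frobSq, smul_eq_mul, Finset.mul_sum, ← Finset.sum_add_distrib]
  gcongr with i _ j _
  simpa using (Even.convexOn_pow even_two).2 trivial trivial ha hb hab (x := F i j) (y := G i j)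

theorem frobSq_smul (c : ℝ) (F : Mat2) : frobSq (c • F) = c ^ 2 * frobSq F := by
  simp only [frobSq, Matrix.smul_apply, smul_eq_mul, mul_pow, ← Finset.mul_sum]

theorem frobSq_nonneg (F : Mat2) : 0 ≤ frobSq F := by
  unfold frobSq; positivity

theorem convexOn_frobSq_div :
    ConvexOn ℝ {p : Mat2 × ℝ | 0 < p.2} fun p => frobSq p.1 / p.2 := by
  refine convexOn_frobSq.perspective.congr fun p (hp : 0 < p.2) => ?_
  simp only [frobSq_smul]; field_simp

section ExtendTop

variable {E : Type*} {s : Set E} {f : E → ℝ}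

open Classical in
def extendTop (s : Set E) (f : E → ℝ) (x : E) : EReal := if x ∈ s then (f x : EReal) else ⊤

theorem extendTop_of_mem {x : E} (hx : x ∈ s) : extendTop s f x = f x := if_pos hx

theorem extendTop_of_notMem {x : E} (hx : x ∉ s) : extendTop s f x = ⊤ := if_neg hx

theorem coe_mul_extendTop_ne_bot {a : ℝ} (ha : 0 ≤ a) (x : E) :
    (a : EReal) * extendTop s f x ≠ ⊥ := by
  by_cases hx : x ∈ s
  · rw [extendTop_of_mem hx, ← EReal.coe_mul]; exact EReal.coe_ne_bot _
  · rcases ha.eq_or_lt with rfl | ha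
    · simp
    · rw [extendTop_of_notMem hx, EReal.coe_mul_top_of_pos ha]; exact top_ne_bot

theorem coe_mul_extendTop_eq_top {a : ℝ} (ha : 0 < a) {x : E} (hx : x ∉ s) :
    (a : EReal) * extendTop s f x = ⊤ := by
  rw [extendTop_of_notMem hx, EReal.coe_mul_top_of_pos ha]

theorem ConvexOn.extendTop_le [AddCommGroup E] [Module ℝ E] (hf : ConvexOn ℝ s f) (x y : E)
    {a b : ℝ} (ha : 0 ≤ a) (hb : 0 ≤ b) (hab : a + b = 1) :
    extendTop s f (a • x + b • y) ≤ a * extendTop s f x + b * extendTop s f y := by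
  rcases ha.eq_or_lt with rfl | ha'
  · obtain rfl : b = 1 := by linarith
    simp
  rcases hb.eq_or_lt with rfl | hb'
  · obtain rfl : a = 1 := by linarith
    simp
  by_cases hx : x ∈ s
  · by_cases hy : y ∈ s
    · rw [extendTop_of_mem hx, extendTop_of_mem hy, extendTop_of_mem (hf.1 hx hy ha hb hab),
        ← EReal.coe_mul, ← EReal.coe_mul, ← EReal.coe_add, EReal.coe_le_coe_iff]
      exact hf.2 hx hy ha hb hab
    · rw [coe_mul_extendTop_eq_top hb' hy, EReal.add_top_of_ne_bot (coe_mul_extendTop_ne_bot ha x)]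
      exact le_top
  · rw [coe_mul_extendTop_eq_top ha' hx, EReal.top_add_of_ne_bot (coe_mul_extendTop_ne_bot hb y)]
    exact le_top

end ExtendTop

theorem polyconvex_of_convexOn {W : Mat2 → ℝ} {f : Mat2 × ℝ → ℝ}
    (hf : ConvexOn ℝ {p : Mat2 × ℝ | 0 < p.2} f)
    (hW : ∀ F : Mat2, 0 < F.det → W F = f (F, F.det)) : Polyconvex W :=
  ⟨extendTop _ f, fun x y _ _ ha hb hab => hf.extendTop_le x y ha hb hab, fun F hF => by
    rw [hW F hF, extendTop_of_mem (show (F, F.det) ∈ {p : Mat2 × ℝ | 0 < p.2} from hF)]⟩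

theorem polyconvex_frobSq_div_det_rpow {β : ℝ} (hβ : 1 ≤ β) :
    Polyconvex fun F => (frobSq F / F.det) ^ β := by
  refine polyconvex_of_convexOn (f := fun p => (frobSq p.1 / p.2) ^ β) ?_ fun F _ => rfl
  refine ⟨convexOn_frobSq_div.1, fun p hp q hq a b ha hb hab => ?_⟩
  have hnonneg (r : Mat2 × ℝ) (hr : 0 < r.2) : 0 ≤ frobSq r.1 / r.2 :=
    div_nonneg (frobSq_nonneg _) hr.le
  have hpq := convexOn_frobSq_div.2 hp hq ha hb hab
  simp only [smul_eq_mul] at hpq ⊢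
  calc _ ≤ (a * (frobSq p.1 / p.2) + b * (frobSq q.1 / q.2)) ^ β :=
        Real.rpow_le_rpow (hnonneg _ (convexOn_frobSq_div.1 hp hq ha hb hab)) hpq (by linarith)
    _ ≤ _ := (convexOn_rpow hβ).2 (hnonneg p hp) (hnonneg q hq) ha hb hab

theorem det_add_smul_vecMulVec (F : Mat2) (ξ η : Fin 2 → ℝ) (t : ℝ) :
    (F + t • vecMulVec ξ η).det = (1 - t) * F.det + t * (F + vecMulVec ξ η).det := by
  simp only [det_fin_two, Matrix.add_apply, Matrix.smul_apply, vecMulVec_apply, smul_eq_mul]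
  ring

theorem Polyconvex.rankOneConvex {W : Mat2 → ℝ} (hW : Polyconvex W) : RankOneConvex W := by
  obtain ⟨P, hP, hWP⟩ := hW
  intro F hF ξ η θ hθ hseg
  have hF₁ : 0 < (F + vecMulVec ξ η).det := by simpa using hseg 1 ⟨zero_le_one, le_rfl⟩
  have hFθ : 0 < (F + (1 - θ) • vecMulVec ξ η).det :=
    hseg (1 - θ) ⟨by linarith [hθ.2], by linarith [hθ.1]⟩
  have hcomb : θ • (F, F.det) + (1 - θ) • (F + vecMulVec ξ η, (F + vecMulVec ξ η).det) =
      (F + (1 - θ) • vecMulVec ξ η, (F + (1 - θ) • vecMulVec ξ η).det) := by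
    refine Prod.ext ?_ (by simp [det_add_smul_vecMulVec])
    ext i j
    simp
    ring
  have key := hP (F, F.det) (F + vecMulVec ξ η, (F + vecMulVec ξ η).det) θ (1 - θ) hθ.1
    (by linarith [hθ.2]) (by ring)
  rw [hcomb, ← hWP _ hFθ, ← hWP _ hF, ← hWP _ hF₁, ← EReal.coe_mul, ← EReal.coe_mul,
    ← EReal.coe_add, EReal.coe_le_coe_iff] at key
  exact key

theorem RankOneConvex.convexOn_diag2 {W : Mat2 → ℝ} (hW : RankOneConvex W) :
    ConvexOn ℝ (Ioi 0) fun x => W (diag2 x 1) := by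
  refine ⟨convex_Ioi 0, fun x (hx : 0 < x) y (hy : 0 < y) a b ha hb hab => ?_⟩
  have hline (t : ℝ) :
      diag2 x 1 + t • vecMulVec ![y - x, 0] ![1, 0] = diag2 (x + t * (y - x)) 1 := by
    ext i j; fin_cases i <;> fin_cases j <;> simp [diag2]
  have key := hW (diag2 x 1) (by simpa [diag2] using hx) ![y - x, 0] ![1, 0] a ⟨ha, by linarith⟩
    fun t ht => by
      rw [hline]
      simpa [diag2] using (convex_Ioi (0 : ℝ)).add_smul_sub_mem hx hy ht
  rw [hline, ← one_smul ℝ (vecMulVec _ _), hline] at key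
  obtain rfl : b = 1 - a := by linarith
  rwa [one_mul, add_sub_cancel, show x + (1 - a) * (y - x) = a * x + (1 - a) * y by ring] at key

theorem ConvexOn.antitoneOn_of_isLittleO {c : ℝ} {f : ℝ → ℝ} (hf : ConvexOn ℝ (Ioi c) f)
    (ho : f =o[atTop] id) : AntitoneOn f (Ioi c) := by
  intro x hx y hy hxy
  by_contra! hlt
  have hxy' : x < y := hxy.lt_of_ne (by rintro rfl; exact hlt.false)
  set m := (f y - f x) / (y - x)
  have hm : 0 < m := div_pos (sub_pos.2 hlt) (sub_pos.2 hxy')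
  -- A positive secant slope `m` forces `f z ≥ f y + m (z - y)` for `z > y`, against `f = o(z)`.
  have : ∀ᶠ z : ℝ in atTop, False := by
    filter_upwards [ho.bound (half_pos hm), eventually_gt_atTop y, eventually_gt_atTop 0,
      eventually_gt_atTop (2 * (y - f y / m))] with z hfz hyz hz hzm
    have hslope := hf.slope_mono_adjacent hx (hy.out.trans hyz) hxy' hyz
    rw [le_div_iff₀ (sub_pos.2 hyz)] at hslope
    rw [Real.norm_eq_abs, id, Real.norm_of_nonneg hz.le] at hfz
    have hzm' : 2 * (m * y - f y) < m * z := by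
      have := mul_lt_mul_of_pos_left hzm hm
      rwa [mul_left_comm, mul_sub, mul_div_cancel₀ _ hm.ne'] at this
    linarith [le_abs_self (f z)]
  exact this.exists.elim fun _ h => h

theorem isLittleO_rpow_sq_add_one_div {β : ℝ} (hβ₀ : 0 ≤ β) (hβ : β < 1) :
    (fun x : ℝ => ((x ^ 2 + 1) / x) ^ β) =o[atTop] id := by
  have hlin : (fun x : ℝ => (x ^ 2 + 1) / x) =O[atTop] id := by
    refine IsBigO.of_bound 2 ?_
    filter_upwards [eventually_ge_atTop 1] with x hx
    rw [Real.norm_eq_abs, Real.norm_eq_abs, id, abs_of_pos (by positivity),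
      abs_of_pos (by positivity), div_le_iff₀ (by positivity)]
    nlinarith
  have hpow : (fun x : ℝ => x ^ β) =o[atTop] id := by
    refine (isLittleO_iff_tendsto' ?_).2 ?_
    · filter_upwards [eventually_gt_atTop 0] with x hx h
      exact absurd h hx.ne'
    · refine (tendsto_rpow_neg_atTop (sub_pos.2 hβ)).congr' ?_
      filter_upwards [eventually_gt_atTop 0] with x hx
      rw [neg_sub, Real.rpow_sub hx, Real.rpow_one, id]
  exact (hlin.rpow hβ₀ (eventually_ge_atTop 0)).trans_isLittleO hpow

theorem frobSq_diag2 (a b : ℝ) : frobSq (diag2 a b) = a ^ 2 + b ^ 2 := by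
  simp [frobSq, diag2]

theorem det_diag2 (a b : ℝ) : (diag2 a b).det = a * b := by
  simp [diag2, det_fin_two_of]

theorem one_le_of_rankOneConvex_frobSq_div_det_rpow {β : ℝ} (hβ : 0 < β)
    (h : RankOneConvex fun F => (frobSq F / F.det) ^ β) : 1 ≤ β := by
  by_contra! hβ₁
  have hconv := h.convexOn_diag2
  simp only [frobSq_diag2, det_diag2, one_pow, mul_one] at hconv
  have hanti := hconv.antitoneOn_of_isLittleO (isLittleO_rpow_sq_add_one_div hβ.le hβ₁)
  have h12 := hanti (by norm_num : (1 : ℝ) ∈ Ioi 0) (by norm_num : (2 : ℝ) ∈ Ioi 0)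
    one_le_two
  norm_num at h12
  exact h12.not_gt (Real.rpow_lt_rpow (by norm_num) (by norm_num) hβ)

/-- for `β > 0`, the function `F ↦ (‖F‖²/det F)^β` (Frobenius norm)
is polyconvex iff `β ≥ 1` and rank-one convex iff `β ≥ 1`. -/
theorem frobSq_div_det_power_polyconvex_iff (β : ℝ) (hβ : 0 < β) :
    (Polyconvex (fun F => (frobSq F / F.det) ^ β) ↔ 1 ≤ β) ∧
    (RankOneConvex (fun F => (frobSq F / F.det) ^ β) ↔ 1 ≤ β) :=
  ⟨⟨fun h => one_le_of_rankOneConvex_frobSq_div_det_rpow hβ h.rankOneConvex,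
      polyconvex_frobSq_div_det_rpow⟩,
    ⟨one_le_of_rankOneConvex_frobSq_div_det_rpow hβ,
      fun h => (polyconvex_frobSq_div_det_rpow h).rankOneConvex⟩⟩
end
end

section
/- For every real 2×2 matrix F, the squared Euclidean (Frobenius) distance of F to SO(2) is given by inf_{R ∈ SO(2)} ‖F − R‖² = ‖F‖² − 2·√(‖F‖² + 2·det F) + 2. -/
open Matrix Set

noncomputable section

lemma rot_mem_SO2 (c s : ℝ) (h : c ^ 2 + s ^ 2 = 1) : !![c, -s; s, c] ∈ SO2 := by
  constructor
  · ext i j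
    fin_cases i <;> fin_cases j <;>
      simp [Matrix.mul_apply, Fin.sum_univ_two, Matrix.one_apply, Matrix.transpose_apply, Matrix.vecHead, Matrix.vecTail] <;> nlinarith
  · simp [Matrix.det_fin_two]; nlinarith

lemma SO2_form {Q : Mat2} (h : Q ∈ SO2) :
    ∃ c s : ℝ, c ^ 2 + s ^ 2 = 1 ∧ Q = !![c, -s; s, c] := by
  obtain ⟨ho, hd⟩ := h
  have h00 := congrFun (congrFun ho 0) 0
  have h01 := congrFun (congrFun ho 0) 1
  have h11 := congrFun (congrFun ho 1) 1
  simp [Matrix.mul_apply, Fin.sum_univ_two, Matrix.one_apply] at h00 h01 h11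
  rw [Matrix.det_fin_two] at hd
  refine ⟨Q 0 0, Q 1 0, by nlinarith, ?_⟩
  have e1 : Q 1 1 = Q 0 0 := by nlinarith [sq_nonneg (Q 1 1 - Q 0 0), sq_nonneg (Q 0 1 + Q 1 0)]
  have e2 : Q 0 1 = -Q 1 0 := by nlinarith [sq_nonneg (Q 1 1 - Q 0 0), sq_nonneg (Q 0 1 + Q 1 0)]
  ext i j
  fin_cases i <;> fin_cases j <;> simp [e1, e2]

/-- for every real 2×2 matrix `F`,
`inf_{R ∈ SO(2)} ‖F − R‖² = ‖F‖² − 2√(‖F‖² + 2 det F) + 2` (Frobenius norm). -/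
theorem euclidean_distance_to_SO2 (F : Mat2) :
    sInf {d : ℝ | ∃ R ∈ SO2, d = frobSq (F - R)} =
      frobSq F - 2 * Real.sqrt (frobSq F + 2 * F.det) + 2 := by
  set a := F 0 0 + F 1 1 with ha
  set b := F 1 0 - F 0 1 with hb
  have key : frobSq F + 2 * F.det = a ^ 2 + b ^ 2 := by
    simp [frobSq, Matrix.det_fin_two, Fin.sum_univ_two, ha, hb]; ring
  rw [key]
  set r := Real.sqrt (a ^ 2 + b ^ 2) with hr
  have hr0 : 0 ≤ r := Real.sqrt_nonneg _
  have hrsq : r ^ 2 = a ^ 2 + b ^ 2 := Real.sq_sqrt (by positivity)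
  have hval : ∀ c s : ℝ, c ^ 2 + s ^ 2 = 1 →
      frobSq (F - !![c, -s; s, c]) = frobSq F + 2 - 2 * (a * c + b * s) := by
    intro c s hcs
    simp [frobSq, Fin.sum_univ_two, Matrix.sub_apply, ha, hb]
    linear_combination 2 * hcs
  apply le_antisymm
  · -- csInf_le : pick minimizer
    have hbdd : BddBelow {d : ℝ | ∃ R ∈ SO2, d = frobSq (F - R)} := by
      refine ⟨frobSq F - 2 * r + 2, ?_⟩
      rintro d ⟨R, hR, rfl⟩
      obtain ⟨c, s, hcs, rfl⟩ := SO2_form hR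
      rw [hval c s hcs]
      have hcauchy : a * c + b * s ≤ r := by
        have h1 : a * c + b * s ≤ Real.sqrt ((a * c + b * s) ^ 2) := by
          rw [Real.sqrt_sq_eq_abs]; exact le_abs_self _
        have h2 : (a * c + b * s) ^ 2 ≤ a ^ 2 + b ^ 2 := by nlinarith [sq_nonneg (a * s - b * c)]
        exact h1.trans (Real.sqrt_le_sqrt h2)
      linarith
    rcases eq_or_lt_of_le (Real.sqrt_nonneg (a ^ 2 + b ^ 2)) with h0 | hpos
    · have : frobSq (F - !![(1:ℝ), -0; 0, 1]) = frobSq F - 2 * r + 2 := by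
        rw [hval 1 0 (by ring)]
        have ha0 : a = 0 := by nlinarith
        have hb0 : b = 0 := by nlinarith
        rw [← hr] at h0
        rw [ha0, hb0, ← h0]; ring
      exact csInf_le hbdd ⟨_, rot_mem_SO2 1 0 (by ring), this.symm⟩
    · rw [← hr] at hpos
      have hcs : (a / r) ^ 2 + (b / r) ^ 2 = 1 := by
        field_simp; linarith [hrsq]
      have : frobSq (F - !![a / r, -(b / r); b / r, a / r]) = frobSq F - 2 * r + 2 := by
        rw [hval _ _ hcs]
        have : a * (a / r) + b * (b / r) = r := by
          field_simp; nlinarith [hrsq]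
        rw [this]; ring
      exact csInf_le hbdd ⟨_, rot_mem_SO2 _ _ hcs, this.symm⟩
  · apply le_csInf
    · exact ⟨_, ⟨_, rot_mem_SO2 1 0 (by ring), rfl⟩⟩
    · rintro d ⟨R, hR, rfl⟩
      obtain ⟨c, s, hcs, rfl⟩ := SO2_form hR
      rw [hval c s hcs]
      have hcauchy : a * c + b * s ≤ r := by
        have h1 : a * c + b * s ≤ Real.sqrt ((a * c + b * s) ^ 2) := by
          rw [Real.sqrt_sq_eq_abs]; exact le_abs_self _
        have h2 : (a * c + b * s) ^ 2 ≤ a ^ 2 + b ^ 2 := by nlinarith [sq_nonneg (a * s - b * c)]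
        exact h1.trans (Real.sqrt_le_sqrt h2)
      linarith
end
end
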